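/- Let R = K[x], T = K^b(proj R), and P_n the complex R --x^n--> R in degrees -1, 0. Consider the octahedron on f = g = x^1_{3,3}: P_3 → P_3 with D = F = P_1[1] ⊕ P_1, E = P_2[1] ⊕ P_2, f' = g' = (y^3_{3,1}, x^0_{3,1})^T, h' = (y^3_{3,2}, x^0_{3,2})^T, g'' = f'' = (-x^2_{1,3}[1], y^1_{1,3}), h'' = (-x^1_{2,3}[1], y^2_{2,3}), k = diag(x^1_{1,2}[1], x^1_{1,2}), k' = diag(x^0_{2,1}[1], x^0_{2,1}), and the modified octahedron with the same data except k~ = (x^1_{1,2}[1], y^1_{1,2}; 0, x^1_{1,2}) and k~' = (x^0_{2,1}[1], -y^2_{2,1}; 0, x^0_{2,1}). Then there is no isomorphism of octahedra between these two octahedra (i.e., no family of isomorphisms φ_X: X → X for X ∈ {A, B, C, D, E, F} commuting with all morphisms of both octahedra). -/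

import Mathlib

/- Setup: `R = K[x]`, the two-term cochain complexes `P n = (R --x^n--> R)` in degrees
`-1, 0`, and the morphisms `x^i_{m,n}` and `y^i_{m,n}` in the bounded homotopy category
`K^b(proj R)` (realized inside the homotopy category of cochain complexes of
`R`-modules). -/

noncomputable section
open CategoryTheory CategoryTheory.Limits Polynomial ZeroObject CategoryTheory.Pretriangulated

variable (K : Type) [Field K]

abbrev RMod := ModuleCat.of (Polynomial K) (Polynomial K)

/-- Multiplication by `x^a` on `R = K[x]`. -/
def mulX (a : ℕ) : RMod K ⟶ RMod K :=
  ModuleCat.ofHom (LinearMap.mulLeft (Polynomial K) ((X : Polynomial K) ^ a))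

lemma mulX_comp (a b : ℕ) : mulX K a ≫ mulX K b = mulX K (a + b) := by
  dsimp [mulX]
  rw [show ((X : Polynomial K) ^ (a + b)) = X ^ b * X ^ a by
        rw [← pow_add, add_comm],
      LinearMap.mulLeft_mul]
  rfl

/-- The graded pieces of the two-term complexes `P n`. -/
def Pobj : ℤ → ModuleCat (Polynomial K) := fun i =>
  if i = -1 ∨ i = 0 then RMod K else ModuleCat.of (Polynomial K) PUnit

lemma PobjNeg : Pobj K (-1) = RMod K := by simp [Pobj]
lemma PobjZero : Pobj K 0 = RMod K := by simp [Pobj]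

/-- The differential of `P n`. -/
def Pd (n : ℕ) : ∀ i : ℤ, Pobj K i ⟶ Pobj K (i + 1) := fun i =>
  if h : i = -1 then
    eqToHom (by rw [h, PobjNeg]) ≫ mulX K n ≫ eqToHom (by rw [h]; norm_num [PobjZero])
  else 0

/-- The two-term complex `P n = (R --x^n--> R)` in degrees `-1, 0`. -/
def P (n : ℕ) : CochainComplex (ModuleCat (Polynomial K)) ℤ :=
  CochainComplex.of (Pobj K) (Pd K n) (fun i => by
    by_cases h : i = -1
    · have h2 : Pd K n (i + 1) = 0 := dif_neg (by omega)
      rw [h2, Limits.comp_zero]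
    · have h1 : Pd K n i = 0 := dif_neg h
      rw [h1, Limits.zero_comp])

lemma P_d_eq_zero (n : ℕ) (i j : ℤ) (hi : i ≠ -1) : (P K n).d i j = 0 := by
  by_cases h : i + 1 = j
  · subst h
    show CochainComplex.of.d (Pobj K) (Pd K n) i (i + 1) = 0
    rw [CochainComplex.of_d]
    exact dif_neg hi
  · exact HomologicalComplex.shape _ _ _ (by simpa using h)

/-- The components of the chain map which is multiplication by `x^a` in degree `-1`
and by `x^b` in degree `0`. -/
def xComp (a b : ℕ) : ∀ i : ℤ, Pobj K i ⟶ Pobj K i := fun i =>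
  if h : i = -1 then eqToHom (by rw [h, PobjNeg]) ≫ mulX K a ≫ eqToHom (by rw [h, PobjNeg])
  else if h0 : i = 0 then
    eqToHom (by rw [h0, PobjZero]) ≫ mulX K b ≫ eqToHom (by rw [h0, PobjZero])
  else 0

/-- The chain map `P m ⟶ P n` which is multiplication by `x^a` in degree `-1` and by
`x^b` in degree `0`; it commutes with the differentials since `a + n = b + m`. -/
def xMap (m n a b : ℕ) (hab : a + n = b + m) : P K m ⟶ P K n :=
  CochainComplex.ofHom (xComp K a b) (by
    intro i
    show xComp K a b i ≫ CochainComplex.of.d (Pobj K) (Pd K n) i (i + 1) =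
      CochainComplex.of.d (Pobj K) (Pd K m) i (i + 1) ≫ xComp K a b (i + 1)
    rw [CochainComplex.of_d, CochainComplex.of_d]
    by_cases hi : i = -1
    · subst hi
      show xComp K a b (-1) ≫ Pd K n (-1) = Pd K m (-1) ≫ xComp K a b (-1 + 1)
      rw [show xComp K a b (-1 + 1) = xComp K a b 0 from rfl]
      rw [show xComp K a b (-1) = eqToHom (PobjNeg K) ≫ mulX K a ≫ eqToHom (PobjNeg K).symm
          from dif_pos rfl]
      rw [show xComp K a b 0 = eqToHom (PobjZero K) ≫ mulX K b ≫ eqToHom (PobjZero K).symm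
          from by rw [xComp, dif_neg (by norm_num), dif_pos rfl]]
      rw [show Pd K n (-1) = eqToHom (PobjNeg K) ≫ mulX K n ≫
            eqToHom (by norm_num [PobjZero] : RMod K = Pobj K (-1 + 1))
          from dif_pos rfl]
      rw [show Pd K m (-1) = eqToHom (PobjNeg K) ≫ mulX K m ≫
            eqToHom (by norm_num [PobjZero] : RMod K = Pobj K (-1 + 1))
          from dif_pos rfl]
      simp only [Category.assoc, eqToHom_trans_assoc, eqToHom_refl, Category.id_comp]
      try simp only [Category.comp_id]
      rw [← Category.assoc (mulX K a), ← Category.assoc (mulX K m), mulX_comp, mulX_comp, hab]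
      exact congrArg (mulX K) (Nat.add_comm b m)
    · have h1 : Pd K m i = 0 := dif_neg hi
      have h2 : Pd K n i = 0 := dif_neg hi
      rw [h1, h2, Limits.comp_zero, Limits.zero_comp])

/-- The components of `y^i_{m,n}`. -/
def yComp (m n a : ℕ) : ∀ i : ℤ, (P K m).X i ⟶ ((P K n)⟦(1 : ℤ)⟧).X i := fun i =>
  if h : i = -1 then
    eqToHom (by rw [h]; exact PobjNeg K) ≫ mulX K a ≫
      eqToHom (by rw [h]; show RMod K = Pobj K (-1 + 1); norm_num [PobjZero])
  else 0

/-- The chain map `P m ⟶ (P n)⟦1⟧` whose only nonzero component is multiplication by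
`x^a` in degree `-1` (landing in the degree `0` part of `P n`). -/
def yMap (m n a : ℕ) : P K m ⟶ (P K n)⟦(1 : ℤ)⟧ where
  f := yComp K m n a
  comm' := fun i j hij => by
    have hj : i + 1 = j := hij
    have hY : ∀ i' j' : ℤ, i' ≠ -2 → ((P K n)⟦(1 : ℤ)⟧).d i' j' = 0 := fun i' j' h => by
      rw [CochainComplex.shiftFunctor_obj_d',
        P_d_eq_zero K n _ _ (by change i' + 1 ≠ -1; omega), smul_zero]
      rfl
    by_cases hi : i = -1
    · rw [hY i j (by omega), Limits.comp_zero,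
        show yComp K m n a j = 0 from dif_neg (by omega), Limits.comp_zero]
    · rw [show yComp K m n a i = 0 from dif_neg hi, Limits.zero_comp]
      by_cases hj' : j = -1
      · rw [P_d_eq_zero K m i j hi, Limits.zero_comp]
      · rw [show yComp K m n a j = 0 from dif_neg hj', Limits.comp_zero]

/-- The homotopy category of cochain complexes of `K[x]`-modules, in which the bounded
homotopy category of finitely generated projectives embeds fully faithfully. -/
abbrev KbT := HomotopyCategory (ModuleCat (Polynomial K)) (ComplexShape.up ℤ)

abbrev Q : CochainComplex (ModuleCat (Polynomial K)) ℤ ⥤ KbT K :=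
  HomotopyCategory.quotient _ _

/-- `P n` as an object of the homotopy category. -/
abbrev Pbar (n : ℕ) : KbT K := (Q K).obj (P K n)

/-- The morphism `x^i_{m,n} : P m ⟶ P n` in the homotopy category, defined for
`max (0, n - m) ≤ i` (expressed with truncated subtraction on `ℕ`); in degree `-1` it is
multiplication by `x^(i+m-n)` and in degree `0` multiplication by `x^i`. -/
def xbar (m n i : ℕ) (h : n - m ≤ i) : Pbar K m ⟶ Pbar K n :=
  (Q K).map (xMap K m n (i + m - n) i (by omega))

/-- The identification `Q(P n ⟦1⟧) ≅ (Q (P n))⟦1⟧` in the homotopy category. -/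
def shIso (n : ℕ) : (Q K).obj ((P K n)⟦(1 : ℤ)⟧) ≅ (Pbar K n)⟦(1 : ℤ)⟧ :=
  ((Q K).commShiftIso (1 : ℤ)).app (P K n)

/-- The morphism `y^i_{m,n} : P m ⟶ (P n)[1]` in the homotopy category, defined for
`i ≤ m`; its only nonzero component is multiplication by `x^(m-i)` in degree `-1`. -/
def ybar (m n i : ℕ) (_h : i ≤ m) : Pbar K m ⟶ (Pbar K n)⟦(1 : ℤ)⟧ :=
  (Q K).map (yMap K m n (m - i)) ≫ (shIso K n).hom

/- The objects and the fourteen structure morphisms of the octahedron built on the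
composable morphisms `x¹₍₃,₃₎ : P₃ ⟶ P₃`, `x¹₍₃,₃₎ : P₃ ⟶ P₃`, following the paper:
`D = F = P₁[1] ⊕ P₁`, `E = P₂[1] ⊕ P₂`. -/

abbrev Dob : KbT K := (Q K).obj ((P K 1)⟦(1 : ℤ)⟧ ⊞ P K 1)
abbrev Eob : KbT K := (Q K).obj ((P K 2)⟦(1 : ℤ)⟧ ⊞ P K 2)

def fO : Pbar K 3 ⟶ Pbar K 3 := xbar K 3 3 1 (by omega)
def gO : Pbar K 3 ⟶ Pbar K 3 := xbar K 3 3 1 (by omega)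
def hO : Pbar K 3 ⟶ Pbar K 3 := xbar K 3 3 2 (by omega)
def f'O : Pbar K 3 ⟶ Dob K :=
  (Q K).map (biprod.lift (yMap K 3 1 0) (xMap K 3 1 2 0 (by omega)))
def g'O : Pbar K 3 ⟶ Dob K := f'O K
def h'O : Pbar K 3 ⟶ Eob K :=
  (Q K).map (biprod.lift (yMap K 3 2 0) (xMap K 3 2 1 0 (by omega)))
def f''O : Dob K ⟶ (Pbar K 3)⟦(1 : ℤ)⟧ :=
  (Q K).map (biprod.desc (-((xMap K 1 3 0 2 (by omega))⟦(1 : ℤ)⟧')) (yMap K 1 3 0)) ≫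
    (shIso K 3).hom
def g''O : Dob K ⟶ (Pbar K 3)⟦(1 : ℤ)⟧ := f''O K
def h''O : Eob K ⟶ (Pbar K 3)⟦(1 : ℤ)⟧ :=
  (Q K).map (biprod.desc (-((xMap K 2 3 0 1 (by omega))⟦(1 : ℤ)⟧')) (yMap K 2 3 0)) ≫
    (shIso K 3).hom
/-- `k = diag(x¹₍₁,₂₎[1], x¹₍₁,₂₎)` (first octahedron). -/
def kO : Dob K ⟶ Eob K :=
  (Q K).map (biprod.map ((xMap K 1 2 0 1 (by omega))⟦(1 : ℤ)⟧') (xMap K 1 2 0 1 (by omega)))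
/-- `k' = diag(x⁰₍₂,₁₎[1], x⁰₍₂,₁₎)` (first octahedron). -/
def k'O : Eob K ⟶ Dob K :=
  (Q K).map (biprod.map ((xMap K 2 1 1 0 (by omega))⟦(1 : ℤ)⟧') (xMap K 2 1 1 0 (by omega)))
/-- `k~ = (x¹₍₁,₂₎[1], y¹₍₁,₂₎; 0, x¹₍₁,₂₎)` (second octahedron). -/
def ktO : Dob K ⟶ Eob K :=
  (Q K).map (biprod.desc
    (biprod.lift ((xMap K 1 2 0 1 (by omega))⟦(1 : ℤ)⟧') 0)
    (biprod.lift (yMap K 1 2 0) (xMap K 1 2 0 1 (by omega))))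
/-- `k~' = (x⁰₍₂,₁₎[1], -y²₍₂,₁₎; 0, x⁰₍₂,₁₎)` (second octahedron). -/
def kt'O : Eob K ⟶ Dob K :=
  (Q K).map (biprod.desc
    (biprod.lift ((xMap K 2 1 1 0 (by omega))⟦(1 : ℤ)⟧') 0)
    (biprod.lift (-(yMap K 2 1 0)) (xMap K 2 1 1 0 (by omega))))
/-- `k'' = f'[1] ∘ g''`. -/
def k''O : Dob K ⟶ (Dob K)⟦(1 : ℤ)⟧ :=
  g''O K ≫ (shiftFunctor (KbT K) (1 : ℤ)).map (f'O K)
def lO : Pbar K 3 ⟶ Eob K :=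
  (Q K).map (biprod.lift (yMap K 3 2 1) (xMap K 3 2 2 1 (by omega)))
def l'O : Eob K ⟶ (Pbar K 3)⟦(1 : ℤ)⟧ :=
  (Q K).map (biprod.desc (-((xMap K 2 3 1 2 (by omega))⟦(1 : ℤ)⟧')) (yMap K 2 3 1)) ≫
    (shIso K 3).hom


/-! Every chain map between the complexes `P n` and their shifts acts in each degree by
multiplication by a polynomial. A homotopy changes the degree-`0` component of a map into
`P n` by a multiple of `x^n`, and the degree-`(-1)` component of a map `P m ⟶ P n[1]` by a
multiple of `x^min(m,n)`. Write `a, b, c` for the polynomials of lifts of `φ_A, φ_B, φ_C`,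
`q, γ` for the components of `φ_E` from its summand `P₂` to `P₂` and to `P₂[1]`, and `v` for
the component of `φ_D` from `P₁` to `P₁`. The squares for `f, g, h', h''` give
`a ≡ b ≡ c ≡ q` and `q - x γ ≡ a` modulo `x²`, so `x ∣ γ`; the square for the off-diagonal
entry of `k~` gives `v ≡ γ` and the one for `f'` gives `b ≡ v` modulo `x`. Hence `x ∣ b`,
which is impossible since `φ_B` is invertible. -/

lemma HomologicalComplex.f_comp_eq_of_quotient_map_eq {V : Type*} [Category V]
    [Preadditive V] {C D : CochainComplex V ℤ} {f g : C ⟶ D}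
    (hfg : (HomotopyCategory.quotient V _).map f = (HomotopyCategory.quotient V _).map g)
    {j : ℤ} {M : V} (π : D.X j ⟶ M) (hD : D.d (j - 1) j ≫ π = 0)
    (hC : ∀ h : C.X (j + 1) ⟶ D.X j, C.d j (j + 1) ≫ h ≫ π = 0) :
    f.f j ≫ π = g.f j ≫ π := by
  have H := HomotopyCategory.homotopyOfEq f g hfg
  rw [H.comm j, dNext_eq H.hom (i' := j + 1) (by simp),
    prevD_eq H.hom (j' := j - 1) (by simp)]
  simp [hD, hC]

lemma biprod.lift_comp_eq {C : Type*} [Category C] [Preadditive C] [HasBinaryBiproducts C]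
    {T U V W : C} (f : T ⟶ U) (g : T ⟶ V) (Ψ : U ⊞ V ⟶ W) :
    biprod.lift f g ≫ Ψ = f ≫ (biprod.inl ≫ Ψ) + g ≫ (biprod.inr ≫ Ψ) := by
  simp [biprod.lift_eq]

lemma biprod.comp_comp_desc_eq {C : Type*} [Category C] [Preadditive C]
    [HasBinaryBiproducts C] {S T U V W : C} (i : S ⟶ T) (Ψ : T ⟶ U ⊞ V) (f : U ⟶ W)
    (g : V ⟶ W) :
    i ≫ Ψ ≫ biprod.desc f g = (i ≫ Ψ ≫ biprod.fst) ≫ f + (i ≫ Ψ ≫ biprod.snd) ≫ g := by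
  simp [biprod.desc_eq]

lemma dvd_of_octahedron_congruences {R : Type*} [CommRing R] [IsDomain R]
    {x a b c q γ v : R} (hx : x ≠ 0) (hab : x ^ 2 ∣ a - b) (hbc : x ^ 2 ∣ b - c)
    (hcq : x ^ 2 ∣ c - q) (hqa : x ^ 2 ∣ q - x * γ - a) (hvγ : x ∣ v - γ)
    (hbv : x ∣ b - v) : x ∣ b := by
  have hxγ : x * x ∣ x * γ := by
    rw [← sq, show x * γ = -((a - b) + (b - c) + (c - q) + (q - x * γ - a)) by ring]
    exact (((hab.add hbc).add hcq).add hqa).neg_right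
  have hγ : x ∣ γ := (mul_dvd_mul_iff_left hx).mp hxγ
  have hv : x ∣ v := by simpa using hvγ.add hγ
  simpa using hbv.add hv

section

variable {K}

def polyOf (f : RMod K ⟶ RMod K) : K[X] := f.hom 1

lemma hom_apply_eq_mul_polyOf (f : RMod K ⟶ RMod K) (r : K[X]) : f.hom r = r * polyOf f := by
  simpa [polyOf] using f.hom.map_smul r 1

lemma polyOf_comp (f g : RMod K ⟶ RMod K) : polyOf (f ≫ g) = polyOf f * polyOf g :=
  hom_apply_eq_mul_polyOf g _

lemma polyOf_mulX (a : ℕ) : polyOf (mulX K a) = X ^ a := mul_one _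

def quotX (m : ℕ) : RMod K ⟶ ModuleCat.of K[X] (K[X] ⧸ Ideal.span {(X : K[X]) ^ m}) :=
  ModuleCat.ofHom (Ideal.span {(X : K[X]) ^ m}).mkQ

lemma comp_quotX_eq_iff {f g : RMod K ⟶ RMod K} {m : ℕ} :
    f ≫ quotX m = g ≫ quotX m ↔ X ^ m ∣ polyOf f - polyOf g := by
  rw [← Ideal.mem_span_singleton, ← Submodule.Quotient.eq]
  exact ⟨fun h => ConcreteCategory.congr_hom h 1, fun h => by ext; exact h⟩

lemma mulX_comp_quotX {m k : ℕ} (hmk : m ≤ k) (h : RMod K ⟶ RMod K) :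
    mulX K k ≫ h ≫ quotX m = 0 := by
  ext
  change Submodule.Quotient.mk (h.hom (X ^ k * 1)) = 0
  rw [hom_apply_eq_mul_polyOf, Submodule.Quotient.mk_eq_zero, Ideal.mem_span_singleton, mul_one]
  exact (pow_dvd_pow X hmk).mul_right _

variable {m n k : ℕ}

def degZeroPoly (F : P K m ⟶ P K n) : K[X] := polyOf (F.f 0)

/- `F.f (-1)` is elaborated first and only then identified with a map `R ⟶ R`; against the
expected type directly, the unifier fails to unfold `(P K m).X (-1)`. -/
def degNegOnePoly (F : P K m ⟶ P K n) : K[X] :=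
  polyOf ((F.f (-1) :) : Pobj K (-1) ⟶ Pobj K (-1))

def shiftPoly (F : P K m ⟶ (P K n)⟦(1 : ℤ)⟧) : K[X] :=
  polyOf ((F.f (-1) :) : Pobj K (-1) ⟶ Pobj K 0)

lemma X_pow_dvd_degZeroPoly_sub {F G : P K m ⟶ P K n} (h : (Q K).map F = (Q K).map G) :
    X ^ n ∣ degZeroPoly F - degZeroPoly G := by
  refine comp_quotX_eq_iff.mp
    (HomologicalComplex.f_comp_eq_of_quotient_map_eq h (j := 0) (quotX n) ?_ ?_)
  · change mulX K n ≫ quotX n = 0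
    simpa using mulX_comp_quotX le_rfl (𝟙 _)
  · intro φ
    rw [P_d_eq_zero K m 0 (0 + 1) (by norm_num), Limits.zero_comp]

lemma X_pow_dvd_shiftPoly_sub (hm : k ≤ m) (hn : k ≤ n) {F G : P K m ⟶ (P K n)⟦(1 : ℤ)⟧}
    (h : (Q K).map F = (Q K).map G) : X ^ k ∣ shiftPoly F - shiftPoly G := by
  refine comp_quotX_eq_iff.mp
    (HomologicalComplex.f_comp_eq_of_quotient_map_eq h (j := -1) (quotX k) ?_ ?_)
  · rw [CochainComplex.shiftFunctor_obj_d']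
    change (-1 : ℤˣ) • mulX K n ≫ quotX k = 0
    simpa using mulX_comp_quotX hn (𝟙 _)
  · exact mulX_comp_quotX hm

@[simp] lemma degZeroPoly_comp (F : P K m ⟶ P K n) (G : P K n ⟶ P K k) :
    degZeroPoly (F ≫ G) = degZeroPoly F * degZeroPoly G :=
  polyOf_comp _ _

@[simp] lemma degZeroPoly_add (F G : P K m ⟶ P K n) :
    degZeroPoly (F + G) = degZeroPoly F + degZeroPoly G := rfl

@[simp] lemma degZeroPoly_id : degZeroPoly (𝟙 (P K n)) = 1 := rfl

@[simp] lemma degZeroPoly_xMap (a b : ℕ) (h : a + n = b + m) :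
    degZeroPoly (xMap K m n a b h) = X ^ b :=
  polyOf_mulX b

@[simp] lemma degZeroPoly_yMap_comp (a : ℕ) (G : (P K n)⟦(1 : ℤ)⟧ ⟶ P K k) :
    degZeroPoly (yMap K m n a ≫ G) = 0 := by
  have hy : (yMap K m n a).f 0 = 0 := by
    change yComp K m n a 0 = 0
    exact dif_neg (by norm_num)
  have hyG : (yMap K m n a ≫ G).f 0 = 0 := by
    rw [HomologicalComplex.comp_f, hy, Limits.zero_comp]
  rw [degZeroPoly, hyG]
  rfl

@[simp] lemma degNegOnePoly_xMap (a b : ℕ) (h : a + n = b + m) :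
    degNegOnePoly (xMap K m n a b h) = X ^ a :=
  polyOf_mulX a

lemma degNegOnePoly_eq_degZeroPoly (F : P K n ⟶ P K n) : degNegOnePoly F = degZeroPoly F := by
  have hF : ((F.f (-1) :) : Pobj K (-1) ⟶ Pobj K (-1)) ≫ mulX K n = mulX K n ≫ F.f 0 :=
    F.comm (-1) 0
  have : degNegOnePoly F * X ^ n = X ^ n * degZeroPoly F := by
    rw [← polyOf_mulX]
    exact (polyOf_comp _ _).symm.trans ((congrArg polyOf hF).trans (polyOf_comp _ _))
  rw [mul_comm] at this
  exact mul_left_cancel₀ (pow_ne_zero n X_ne_zero) this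

@[simp] lemma shiftPoly_add (F G : P K m ⟶ (P K n)⟦(1 : ℤ)⟧) :
    shiftPoly (F + G) = shiftPoly F + shiftPoly G := rfl

@[simp] lemma shiftPoly_neg (F : P K m ⟶ (P K n)⟦(1 : ℤ)⟧) :
    shiftPoly (-F) = -shiftPoly F := rfl

@[simp] lemma shiftPoly_yMap (a : ℕ) : shiftPoly (yMap K m n a) = X ^ a :=
  polyOf_mulX a

@[simp] lemma shiftPoly_comp_shift (F : P K m ⟶ (P K n)⟦(1 : ℤ)⟧) (G : P K n ⟶ P K k) :
    shiftPoly (F ≫ G⟦(1 : ℤ)⟧') = shiftPoly F * degZeroPoly G :=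
  polyOf_comp _ _

@[simp] lemma shiftPoly_comp (F : P K m ⟶ P K n) (G : P K n ⟶ (P K k)⟦(1 : ℤ)⟧) :
    shiftPoly (F ≫ G) = degNegOnePoly F * shiftPoly G :=
  polyOf_comp _ _

lemma not_X_dvd_degZeroPoly_of_iso (hn : n ≠ 0) (e : Pbar K n ≅ Pbar K n)
    {B : P K n ⟶ P K n} (hB : (Q K).map B = e.hom) : ¬ X ∣ degZeroPoly B := by
  obtain ⟨B', hB'⟩ := (Q K).map_surjective e.inv
  have hQ : (Q K).map (B ≫ B') = (Q K).map (𝟙 _) := by simp [hB, hB']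
  have hinv : X ∣ degZeroPoly B * degZeroPoly B' - 1 :=
    (dvd_pow_self X hn).trans (by simpa using X_pow_dvd_degZeroPoly_sub hQ)
  intro hX
  have : X ∣ (1 : K[X]) := by simpa using dvd_sub (hX.mul_right (degZeroPoly B')) hinv
  exact not_isUnit_X (isUnit_of_dvd_one this)

lemma X_pow_dvd_of_comm_xMap {a b : ℕ} (hb : b ≤ n) (hab : a + n = b + m) {A : P K m ⟶ P K m}
    {B : P K n ⟶ P K n}
    (h : (Q K).map A ≫ (Q K).map (xMap K m n a b hab) =
      (Q K).map (xMap K m n a b hab) ≫ (Q K).map B) :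
    X ^ (n - b) ∣ degZeroPoly A - degZeroPoly B := by
  have := X_pow_dvd_degZeroPoly_sub (F := A ≫ xMap K m n a b hab) (G := xMap K m n a b hab ≫ B)
    (by simpa only [Functor.map_comp] using h)
  rw [degZeroPoly_comp, degZeroPoly_comp, degZeroPoly_xMap, mul_comm, ← mul_sub,
    ← pow_mul_pow_sub X hb] at this
  exact (mul_dvd_mul_iff_left (pow_ne_zero b X_ne_zero)).mp this

lemma X_pow_dvd_of_comm_lift {a c : ℕ} (hab : a + n = m) {B : P K m ⟶ P K m}
    {Ψ : (P K n)⟦(1 : ℤ)⟧ ⊞ P K n ⟶ (P K n)⟦(1 : ℤ)⟧ ⊞ P K n}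
    (h : (Q K).map B ≫ (Q K).map (biprod.lift (yMap K m n c) (xMap K m n a 0 (by omega))) =
      (Q K).map (biprod.lift (yMap K m n c) (xMap K m n a 0 (by omega))) ≫ (Q K).map Ψ) :
    X ^ n ∣ degZeroPoly B - degZeroPoly (biprod.inr ≫ Ψ ≫ biprod.snd) := by
  have hQ : (Q K).map (B ≫ xMap K m n a 0 (by omega)) =
      (Q K).map (yMap K m n c ≫ (biprod.inl ≫ Ψ ≫ biprod.snd) +
        xMap K m n a 0 (by omega) ≫ (biprod.inr ≫ Ψ ≫ biprod.snd)) := by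
    rw [← biprod.lift_comp_eq]
    have := h =≫ (Q K).map biprod.snd
    simp only [Category.assoc, ← Functor.map_comp, biprod.lift_snd] at this
    exact this
  simpa using X_pow_dvd_degZeroPoly_sub hQ

lemma X_sq_dvd_of_comm_h''O {A : P K 3 ⟶ P K 3}
    {Φ : (P K 2)⟦(1 : ℤ)⟧ ⊞ P K 2 ⟶ (P K 2)⟦(1 : ℤ)⟧ ⊞ P K 2}
    (h : (Q K).map Φ ≫ h''O K = h''O K ≫ ((Q K).map A)⟦(1 : ℤ)⟧') :
    X ^ 2 ∣ degZeroPoly (biprod.inr ≫ Φ ≫ biprod.snd) -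
      X * shiftPoly (biprod.inr ≫ Φ ≫ biprod.fst) - degZeroPoly A := by
  have hΦ : (Q K).map (Φ ≫ biprod.desc (-((xMap K 2 3 0 1 (by omega))⟦(1 : ℤ)⟧'))
        (yMap K 2 3 0)) =
      (Q K).map (biprod.desc (-((xMap K 2 3 0 1 (by omega))⟦(1 : ℤ)⟧')) (yMap K 2 3 0) ≫
        A⟦(1 : ℤ)⟧') := by
    rw [← cancel_mono (shIso K 3).hom, Functor.map_comp, Functor.map_comp, Category.assoc,
      Category.assoc, shIso, Iso.app_hom, Functor.commShiftIso_hom_naturality]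
    simpa only [h''O, shIso, Iso.app_hom, Category.assoc] using h
  have hQ : (Q K).map
      ((biprod.inr ≫ Φ ≫ biprod.fst) ≫ (-((xMap K 2 3 0 1 (by omega))⟦(1 : ℤ)⟧')) +
        (biprod.inr ≫ Φ ≫ biprod.snd) ≫ yMap K 2 3 0) =
      (Q K).map (yMap K 2 3 0 ≫ A⟦(1 : ℤ)⟧') := by
    rw [← biprod.comp_comp_desc_eq]
    have := congrArg ((Q K).map biprod.inr ≫ ·) hΦ
    simp only [← Functor.map_comp, biprod.inr_desc_assoc] at this
    exact this
  have := X_pow_dvd_shiftPoly_sub le_rfl (by norm_num) hQ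
  simp only [Preadditive.comp_neg, shiftPoly_add, shiftPoly_neg, shiftPoly_comp_shift,
    shiftPoly_comp, shiftPoly_yMap, degZeroPoly_xMap, degNegOnePoly_eq_degZeroPoly] at this
  convert this using 1
  ring

lemma X_dvd_of_comm_kO {Ψ : (P K 1)⟦(1 : ℤ)⟧ ⊞ P K 1 ⟶ (P K 1)⟦(1 : ℤ)⟧ ⊞ P K 1}
    {Φ : (P K 2)⟦(1 : ℤ)⟧ ⊞ P K 2 ⟶ (P K 2)⟦(1 : ℤ)⟧ ⊞ P K 2}
    (h : (Q K).map Ψ ≫ ktO K = kO K ≫ (Q K).map Φ) :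
    X ∣ degZeroPoly (biprod.inr ≫ Ψ ≫ biprod.snd) -
      shiftPoly (biprod.inr ≫ Φ ≫ biprod.fst) := by
  have hQ : (Q K).map
      ((biprod.inr ≫ Ψ ≫ biprod.fst) ≫ (xMap K 1 2 0 1 (by omega))⟦(1 : ℤ)⟧' +
        (biprod.inr ≫ Ψ ≫ biprod.snd) ≫ yMap K 1 2 0) =
      (Q K).map (xMap K 1 2 0 1 (by omega) ≫ biprod.inr ≫ Φ ≫ biprod.fst) := by
    rw [← biprod.comp_comp_desc_eq]
    have := (Q K).map biprod.inr ≫= h =≫ (Q K).map biprod.fst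
    simp only [ktO, kO, ← Functor.map_comp, Category.assoc, biprod.inr_map_assoc] at this
    convert this using 4
    apply biprod.hom_ext' <;> simp
  have := X_pow_dvd_shiftPoly_sub le_rfl (by norm_num) hQ
  simp only [shiftPoly_add, shiftPoly_comp_shift, shiftPoly_comp, shiftPoly_yMap,
    degZeroPoly_xMap, degNegOnePoly_xMap, degNegOnePoly_eq_degZeroPoly, pow_one, pow_zero] at this
  refine (dvd_add_right (dvd_mul_right X (shiftPoly (biprod.inr ≫ Ψ ≫ biprod.fst)))).mp ?_
  convert this using 1
  ring

end

/-- there is no isomorphism of octahedra between the two good octahedra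
on `(f, g) = (x¹₍₃,₃₎, x¹₍₃,₃₎)`: the first with `k, k'` and the second with `k~, k~'`
(all other structure morphisms being equal); that is, there is no family of
isomorphisms `φ_A, ..., φ_F` intertwining all fourteen structure morphisms. -/
theorem octahedra_not_isomorphic :
    ¬ ∃ (φA φB φC : Pbar K 3 ≅ Pbar K 3) (φD : Dob K ≅ Dob K) (φE : Eob K ≅ Eob K)
        (φF : Dob K ≅ Dob K),
      φA.hom ≫ fO K = fO K ≫ φB.hom ∧
      φB.hom ≫ gO K = gO K ≫ φC.hom ∧
      φA.hom ≫ hO K = hO K ≫ φC.hom ∧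
      φB.hom ≫ f'O K = f'O K ≫ φD.hom ∧
      φD.hom ≫ f''O K = f''O K ≫ (shiftFunctor (KbT K) (1 : ℤ)).map φA.hom ∧
      φC.hom ≫ g'O K = g'O K ≫ φF.hom ∧
      φF.hom ≫ g''O K = g''O K ≫ (shiftFunctor (KbT K) (1 : ℤ)).map φB.hom ∧
      φC.hom ≫ h'O K = h'O K ≫ φE.hom ∧
      φE.hom ≫ h''O K = h''O K ≫ (shiftFunctor (KbT K) (1 : ℤ)).map φA.hom ∧
      φD.hom ≫ ktO K = kO K ≫ φE.hom ∧
      φE.hom ≫ kt'O K = k'O K ≫ φF.hom ∧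
      φF.hom ≫ k''O K = k''O K ≫ (shiftFunctor (KbT K) (1 : ℤ)).map φD.hom ∧
      φB.hom ≫ lO K = lO K ≫ φE.hom ∧
      φE.hom ≫ l'O K = l'O K ≫ (shiftFunctor (KbT K) (1 : ℤ)).map φB.hom := by
  rintro ⟨φA, φB, φC, φD, φE, -, hf, hg, -, hf', -, -, -, hh', hh'', hk, -, -, -, -⟩
  obtain ⟨A, hA⟩ := (Q K).map_surjective φA.hom
  obtain ⟨B, hB⟩ := (Q K).map_surjective φB.hom
  obtain ⟨C, hC⟩ := (Q K).map_surjective φC.hom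
  obtain ⟨Ψ, hΨ⟩ := (Q K).map_surjective φD.hom
  obtain ⟨Φ, hΦ⟩ := (Q K).map_surjective φE.hom
  rw [← hA, ← hB] at hf
  rw [← hB, ← hC] at hg
  rw [← hB, ← hΨ] at hf'
  rw [← hC, ← hΦ] at hh'
  rw [← hA, ← hΦ] at hh''
  rw [← hΨ, ← hΦ] at hk
  have hab := X_pow_dvd_of_comm_xMap (a := 1) (b := 1) (by norm_num) rfl hf
  have hbc := X_pow_dvd_of_comm_xMap (a := 1) (b := 1) (by norm_num) rfl hg
  have hcq := X_pow_dvd_of_comm_lift (a := 1) (c := 0) (by norm_num) hh'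
  have hbv := X_pow_dvd_of_comm_lift (a := 2) (c := 0) (by norm_num) hf'
  rw [pow_one] at hbv
  exact not_X_dvd_degZeroPoly_of_iso three_ne_zero φB hB <|
    dvd_of_octahedron_congruences X_ne_zero hab hbc hcq (X_sq_dvd_of_comm_h''O hh'')
      (X_dvd_of_comm_kO hk) hbv
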